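/- arXiv:1105.4918 — 4 statements merged into one kernel-verified Lean document; each statement's English description precedes it below -/
import Mathlib

section
/- Suppose M > 0, L ≥ max(0.62, 0.15*M), r ≥ 1 with r ≥ sup_{y∈[0,1]} |Q*s(y)|, 0 < t < 1/(B+C), and 0 < ε ≤ B/(2*(L*r + L + r)). Set δ₁ = L*ε/(1 - (L+r)*ε), δ₂ = L*r*ε/(1 - (L+r)*ε), and ρ = (1 - t*B) + t*((1 - t*B)*δ₁ + δ₂). Then δ₁ ≤ δ₂ < B/2 and ρ < 1, and for any r-admissible graphs Φ, Γ in G_L with graph-transform images Ψ_Φ and Ψ_Γ respectively, sup_{η∈ℝ} ‖Ψ_Φ(η) - Ψ_Γ(η)‖_∞ ≤ ρ * sup_{η∈ℝ} ‖Φ(η) - Γ(η)‖_∞; that is, the Budyko graph transform is a contraction on the set of r-admissible graphs in G_L. -/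
/-!
A point `η` has, for each of the two graphs, a preimage `ξ` under the iceline update
`ξ ↦ ξ + ε t (Φ ξ ξ - T_c)`: this map is the identity plus a bounded continuous perturbation.
Since the diagonals `ξ ↦ Φ ξ ξ` are `(L + r)`-Lipschitz, the two preimages satisfy
`|ξ₁ - ξ₂| (1 - (L + r) ε) ≤ ε t D`, where `D` is the distance of the graphs.
The Euler step `T + t F(T, ξ)` is `(1 - t B)`-Lipschitz in `T` for the sup norm, since
`T ↦ ∫₀¹ T` is `1`-Lipschitz and `t (B + C) ≤ 1`, and it is `0.15 M r t`-Lipschitz in `ξ`,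
because `tanh` is `1`-Lipschitz. Combining the two estimates gives the factor `ρ`.
-/

noncomputable section

open scoped BoundedContinuousFunction

namespace Budyko

/-- Solar constant (W/m²). -/
def Q : ℝ := 343
/-- OLR constant A (W/m²). -/
def A : ℝ := 202
/-- OLR constant B (W/m²/°C). -/
def B : ℝ := 1.9
/-- Transport constant C (W/m²/°C). -/
def C : ℝ := 3.04
/-- Critical temperature (°C). -/
def Tc : ℝ := -10

/-- Insolation distribution. -/
def s (y : ℝ) : ℝ := 1 - 0.241 * (3 * y ^ 2 - 1)

/-- Clamp to `[0,1]`. -/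
def clamp (y : ℝ) : ℝ := min (max y 0) 1

/-- Insolation extended to the real line. -/
def sTilde (y : ℝ) : ℝ := s (clamp y)

/-- Iceline-dependent smooth albedo with steepness `M`. -/
def albedo (M η y : ℝ) : ℝ := 0.47 + 0.15 * Real.tanh (M * (clamp y - η))

/-- The Budyko vector field `F(T,η)(y)`. -/
def F (M : ℝ) (T : ℝ →ᵇ ℝ) (η y : ℝ) : ℝ :=
  Q * sTilde y * (1 - albedo M η y) - (B + C) * T y - A + C * ∫ u in (0:ℝ)..1, T u

/-- `g(η) = ∫₀¹ Q s(y) (1 - a(η)(y)) dy`. -/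
def g (M η : ℝ) : ℝ := ∫ y in (0:ℝ)..1, Q * s y * (1 - albedo M η y)

/-- The local equilibrium temperature profile `T*(η)(y)`. -/
def Tstar (M η y : ℝ) : ℝ :=
  (Q * sTilde y * (1 - albedo M η y) - A + (C / B) * (g M η - A)) / (B + C)

/-- Membership in the class `G_L` of Lipschitz graphs. -/
def MemGL (L : ℝ) (Φ : ℝ → ℝ →ᵇ ℝ) : Prop :=
  ∀ ζ η : ℝ, ‖Φ ζ - Φ η‖ ≤ L * |ζ - η|

/-- A graph is `r`-admissible if `‖Φ‖_G ≤ r` and every `Φ(η)` is `r`-Lipschitz. -/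
def Admissible (r : ℝ) (Φ : ℝ → ℝ →ᵇ ℝ) : Prop :=
  (∀ η : ℝ, ‖Φ η‖ ≤ r) ∧ ∀ η x z : ℝ, |Φ η x - Φ η z| ≤ r * |x - z|

/-- `Ψ` is a graph-transform image of `Φ` (time step `t`, slow parameter `ε`). -/
def IsGTImage (M t ε : ℝ) (Φ Ψ : ℝ → ℝ →ᵇ ℝ) : Prop :=
  ∀ η ξ : ℝ, η = ξ + ε * t * (Φ ξ ξ - Tc) → ∀ y : ℝ, Ψ η y = Φ ξ y + t * F M (Φ ξ) ξ y

/-- `Φ` is a fixed point of the Budyko graph transform. -/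
def IsGTFixed (M t ε : ℝ) (Φ : ℝ → ℝ →ᵇ ℝ) : Prop := IsGTImage M t ε Φ Φ

theorem _root_.Real.hasDerivAt_tanh (x : ℝ) :
    HasDerivAt Real.tanh (1 / Real.cosh x ^ 2) x := by
  have h := (Real.hasDerivAt_sinh x).div (Real.hasDerivAt_cosh x) (Real.cosh_pos x).ne'
  rw [← sq, ← sq, Real.cosh_sq_sub_sinh_sq] at h
  exact h.congr_of_eventuallyEq (.of_forall fun y => Real.tanh_eq_sinh_div_cosh y)

theorem _root_.Real.lipschitzWith_tanh : LipschitzWith 1 Real.tanh := by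
  refine lipschitzWith_of_nnnorm_deriv_le (fun x => (Real.hasDerivAt_tanh x).differentiableAt)
    fun x => ?_
  rw [(Real.hasDerivAt_tanh x).deriv, ← NNReal.coe_le_coe, coe_nnnorm, NNReal.coe_one,
    Real.norm_eq_abs, abs_of_pos (by positivity), div_le_one (by positivity)]
  nlinarith [Real.one_le_cosh x]

open Filter in
theorem _root_.Real.surjective_id_add_of_abs_le {h : ℝ → ℝ} {c : ℝ} (hh : Continuous h)
    (hc : ∀ x, |h x| ≤ c) : Function.Surjective fun x => x + h x :=
  (continuous_id.add hh).surjective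
    (tendsto_atTop_add_right_of_le _ (-c) tendsto_id fun x => neg_le_of_abs_le (hc x))
    (tendsto_atBot_add_right_of_ge _ c tendsto_id fun x => le_of_abs_le (hc x))

theorem abs_apply_sub_le_norm (f g : ℝ →ᵇ ℝ) (y : ℝ) : |f y - g y| ≤ ‖f - g‖ := by
  simpa only [Real.norm_eq_abs, BoundedContinuousFunction.coe_sub, Pi.sub_apply] using
    (f - g).norm_coe_le_norm y

theorem abs_integral_sub_le_norm (f g : ℝ →ᵇ ℝ) :
    |(∫ u in (0:ℝ)..1, f u) - ∫ u in (0:ℝ)..1, g u| ≤ ‖f - g‖ := by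
  rw [← intervalIntegral.integral_sub (f.continuous.intervalIntegrable _ _)
    (g.continuous.intervalIntegrable _ _), ← Real.norm_eq_abs]
  simpa using intervalIntegral.norm_integral_le_of_norm_le_const (a := 0) (b := 1)
    fun u _ => (f - g).norm_coe_le_norm u

theorem abs_Q_mul_sTilde_le {r : ℝ} (hr : ∀ y ∈ Set.Icc (0:ℝ) 1, |Q * s y| ≤ r) (y : ℝ) :
    |Q * sTilde y| ≤ r :=
  hr _ ⟨le_min (le_max_right y 0) zero_le_one, min_le_right _ _⟩

theorem abs_albedo_sub_le {M : ℝ} (hM : 0 ≤ M) (η ζ y : ℝ) :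
    |albedo M η y - albedo M ζ y| ≤ 0.15 * M * |η - ζ| := by
  have htanh := Real.lipschitzWith_tanh.dist_le_mul (M * (clamp y - η)) (M * (clamp y - ζ))
  simp only [NNReal.coe_one, one_mul, Real.dist_eq] at htanh
  rw [show M * (clamp y - η) - M * (clamp y - ζ) = M * (ζ - η) by ring, abs_mul,
    abs_of_nonneg hM, abs_sub_comm ζ η] at htanh
  rw [albedo, albedo, add_sub_add_left_eq_sub, ← mul_sub, abs_mul, abs_of_nonneg (by norm_num),
    mul_assoc]
  gcongr

theorem abs_euler_step_sub_le {M t r : ℝ} (hM : 0 ≤ M) (ht : 0 ≤ t) (htBC : t * (B + C) ≤ 1)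
    (hQs : ∀ y, |Q * sTilde y| ≤ r) (T S : ℝ →ᵇ ℝ) (η ζ y : ℝ) :
    |(T y + t * F M T η y) - (S y + t * F M S ζ y)| ≤
      (1 - t * B) * ‖T - S‖ + t * r * (0.15 * M) * |η - ζ| := by
  have hC : 0 ≤ C := by norm_num [C]
  have hdecomp : (T y + t * F M T η y) - (S y + t * F M S ζ y) =
      (1 - t * (B + C)) * (T y - S y) + t * (Q * sTilde y) * (albedo M ζ y - albedo M η y) +
        t * C * ((∫ u in (0:ℝ)..1, T u) - ∫ u in (0:ℝ)..1, S u) := by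
    simp only [F]; ring
  have hT := abs_apply_sub_le_norm T S y
  have hI := abs_integral_sub_le_norm T S
  have ha := abs_albedo_sub_le hM ζ η y
  rw [abs_sub_comm ζ η] at ha
  have hfirst : |(1 - t * (B + C)) * (T y - S y)| ≤ (1 - t * (B + C)) * ‖T - S‖ := by
    rw [abs_mul, abs_of_nonneg (sub_nonneg.2 htBC)]
    gcongr
  have halbedo : |t * (Q * sTilde y) * (albedo M ζ y - albedo M η y)| ≤
      t * (r * (0.15 * M * |η - ζ|)) := by
    rw [abs_mul, abs_mul, abs_of_nonneg ht, mul_assoc]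
    gcongr
    · exact (abs_nonneg _).trans (hQs y)
    · exact hQs y
  have htransport : |t * C * ((∫ u in (0:ℝ)..1, T u) - ∫ u in (0:ℝ)..1, S u)| ≤
      t * C * ‖T - S‖ := by
    rw [abs_mul, abs_of_nonneg (mul_nonneg ht hC)]
    gcongr
  rw [hdecomp]
  linarith [abs_add_three ((1 - t * (B + C)) * (T y - S y))
    (t * (Q * sTilde y) * (albedo M ζ y - albedo M η y))
    (t * C * ((∫ u in (0:ℝ)..1, T u) - ∫ u in (0:ℝ)..1, S u))]

theorem abs_diag_sub_le {L r : ℝ} {Φ : ℝ → ℝ →ᵇ ℝ} (hΦL : MemGL L Φ)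
    (hΦr : ∀ η x z, |Φ η x - Φ η z| ≤ r * |x - z|) (a b : ℝ) :
    |Φ a a - Φ b b| ≤ (L + r) * |a - b| :=
  calc |Φ a a - Φ b b| ≤ |Φ a a - Φ b a| + |Φ b a - Φ b b| := abs_sub_le _ _ _
    _ ≤ L * |a - b| + r * |a - b| :=
        add_le_add ((abs_apply_sub_le_norm _ _ a).trans (hΦL a b)) (hΦr b a b)
    _ = (L + r) * |a - b| := by ring

theorem exists_add_mul_diag_sub_Tc_eq {L r : ℝ} {Φ : ℝ → ℝ →ᵇ ℝ} (hΦ : Admissible r Φ)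
    (hΦL : MemGL L Φ) (κ η : ℝ) : ∃ ξ, ξ + κ * (Φ ξ ξ - Tc) = η := by
  have hcont : Continuous fun ξ => Φ ξ ξ :=
    (LipschitzWith.of_dist_le' (K := L + r) fun a b => by
      simpa only [Real.dist_eq] using abs_diag_sub_le hΦL hΦ.2 a b).continuous
  refine Real.surjective_id_add_of_abs_le (h := fun ξ => κ * (Φ ξ ξ - Tc))
    (c := |κ| * (r + |Tc|)) (continuous_const.mul (hcont.sub continuous_const)) (fun ξ => ?_) η
  rw [abs_mul]
  gcongr
  exact (abs_sub _ _).trans (add_le_add_left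
    (((Φ ξ).norm_coe_le_norm ξ).trans (hΦ.1 ξ)) _)

theorem abs_sub_mul_le_of_add_mul_eq {f₁ f₂ : ℝ → ℝ} {κ K D ξ₁ ξ₂ : ℝ} (hκ : 0 ≤ κ)
    (hf₁ : ∀ a b, |f₁ a - f₁ b| ≤ K * |a - b|) (hD : ∀ x, |f₁ x - f₂ x| ≤ D)
    (h : ξ₁ + κ * f₁ ξ₁ = ξ₂ + κ * f₂ ξ₂) : |ξ₁ - ξ₂| * (1 - κ * K) ≤ κ * D := by
  have heq : ξ₁ - ξ₂ = κ * ((f₂ ξ₂ - f₁ ξ₂) + (f₁ ξ₂ - f₁ ξ₁)) := by linear_combination h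
  have hle : |ξ₁ - ξ₂| ≤ κ * (D + K * |ξ₁ - ξ₂|) :=
    calc |ξ₁ - ξ₂| = κ * |(f₂ ξ₂ - f₁ ξ₂) + (f₁ ξ₂ - f₁ ξ₁)| := by
          rw [heq, abs_mul, abs_of_nonneg hκ]
      _ ≤ κ * (D + K * |ξ₁ - ξ₂|) := by
          gcongr
          refine (abs_add_le _ _).trans (add_le_add ?_ ?_)
          · rw [abs_sub_comm]; exact hD ξ₂
          · rw [abs_sub_comm ξ₁ ξ₂]; exact hf₁ ξ₂ ξ₁
  linarith

theorem abs_sub_mul_le_of_shift_eq {L r κ D ξ₁ ξ₂ : ℝ} {Φ Γ : ℝ → ℝ →ᵇ ℝ} (hκ : 0 ≤ κ)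
    (hΦr : ∀ η x z, |Φ η x - Φ η z| ≤ r * |x - z|) (hΦL : MemGL L Φ)
    (hD : ∀ ξ, ‖Φ ξ - Γ ξ‖ ≤ D) (h : ξ₁ + κ * (Φ ξ₁ ξ₁ - Tc) = ξ₂ + κ * (Γ ξ₂ ξ₂ - Tc)) :
    |ξ₁ - ξ₂| * (1 - κ * (L + r)) ≤ κ * D :=
  abs_sub_mul_le_of_add_mul_eq (f₁ := fun ξ => Φ ξ ξ) (f₂ := fun ξ => Γ ξ ξ) hκ
    (abs_diag_sub_le hΦL hΦr) (fun x => (abs_apply_sub_le_norm _ _ x).trans (hD x))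
    (by linear_combination h)

theorem mul_eps_le_half_B {L r ε : ℝ} (hL : 0 < L) (hr : 0 < r)
    (hε : ε ≤ B / (2 * (L * r + L + r))) : (L * r + L + r) * ε ≤ B / 2 := by
  have hS : 0 < L * r + L + r := by positivity
  calc (L * r + L + r) * ε ≤ (L * r + L + r) * (B / (2 * (L * r + L + r))) := by gcongr
    _ = B / 2 := by field_simp

theorem div_one_sub_lt_half_B {L r ε : ℝ} (hL : 0 < L) (hr : 0 < r) (hε0 : 0 < ε)
    (hε : (L * r + L + r) * ε ≤ B / 2) : L * r * ε / (1 - (L + r) * ε) < B / 2 := by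
  have hLrε : 0 ≤ L * r * ε := by positivity
  have hLr : 0 < (L + r) * ε := by positivity
  norm_num [B] at hε ⊢
  rw [div_lt_iff₀ (by linarith)]
  linarith

theorem contraction_factor_lt_one {t δ₁ δ₂ : ℝ} (ht : 0 < t) (hδ₁ : 0 ≤ δ₁)
    (hδ₁₂ : δ₁ ≤ δ₂) (hδ₂ : δ₂ < B / 2) : (1 - t * B) + t * ((1 - t * B) * δ₁ + δ₂) < 1 := by
  have : 0 ≤ t * B * δ₁ := mul_nonneg (mul_nonneg ht.le (by norm_num [B])) hδ₁
  have : t * ((1 - t * B) * δ₁ + δ₂) < t * B := mul_lt_mul_of_pos_left (by linarith) ht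
  linarith

theorem mul_le_mul_div_of_mul_le {a c d ε t D : ℝ} (ha : 0 < a) (hc : 0 ≤ c)
    (hd : d * a ≤ ε * t * D) : c * d ≤ t * (c * ε / a) * D := by
  rw [show t * (c * ε / a) * D = c * (ε * t * D) / a by ring, le_div_iff₀ ha, mul_assoc]
  exact mul_le_mul_of_nonneg_left hd hc

theorem norm_graphTransform_sub_le {M L r t ε D : ℝ} {Φ Γ ΨΦ ΨΓ : ℝ → ℝ →ᵇ ℝ} (hM : 0 ≤ M)
    (hLM : 0.15 * M ≤ L) (hQs : ∀ y, |Q * sTilde y| ≤ r) (ht0 : 0 < t)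
    (htBC : t * (B + C) ≤ 1) (hε : 0 ≤ ε) (hden : 0 < 1 - (L + r) * ε)
    (hΦ : Admissible r Φ) (hΦL : MemGL L Φ) (hΓ : Admissible r Γ) (hΓL : MemGL L Γ)
    (hΨΦ : IsGTImage M t ε Φ ΨΦ) (hΨΓ : IsGTImage M t ε Γ ΨΓ)
    (hD : ∀ ξ, ‖Φ ξ - Γ ξ‖ ≤ D) (η : ℝ) :
    ‖ΨΦ η - ΨΓ η‖ ≤ ((1 - t * B) + t * ((1 - t * B) * (L * ε / (1 - (L + r) * ε)) +
      L * r * ε / (1 - (L + r) * ε))) * D := by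
  have ht1 : t ≤ 1 := by nlinarith [show (1 : ℝ) ≤ B + C by norm_num [B, C]]
  have h1tB : 0 ≤ 1 - t * B := by nlinarith [show (0 : ℝ) ≤ C by norm_num [C]]
  have hr : 0 ≤ r := (abs_nonneg _).trans (hQs 0)
  have hL : 0 ≤ L := le_trans (by positivity) hLM
  have hD0 : 0 ≤ D := (norm_nonneg _).trans (hD 0)
  obtain ⟨ξ₁, hξ₁⟩ := exists_add_mul_diag_sub_Tc_eq hΦ hΦL (ε * t) η
  obtain ⟨ξ₂, hξ₂⟩ := exists_add_mul_diag_sub_Tc_eq hΓ hΓL (ε * t) η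
  set d := |ξ₁ - ξ₂|
  have hd : d * (1 - (L + r) * ε) ≤ ε * t * D := by
    have hξ := abs_sub_mul_le_of_shift_eq (by positivity) hΦ.2 hΦL hD (hξ₁.trans hξ₂.symm)
    have := mul_le_mul_of_nonneg_left ht1 (mul_nonneg (add_nonneg hL hr) hε)
    exact le_trans (mul_le_mul_of_nonneg_left (by linarith) (abs_nonneg _)) hξ
  have hnorm : ‖Φ ξ₁ - Γ ξ₂‖ ≤ D + L * d :=
    (norm_sub_le_norm_sub_add_norm_sub _ (Φ ξ₂) _).trans (by linarith [hΦL ξ₁ ξ₂, hD ξ₂])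
  set δ₁ := L * ε / (1 - (L + r) * ε)
  set δ₂ := L * r * ε / (1 - (L + r) * ε)
  have hδ₁ : L * d ≤ t * δ₁ * D := mul_le_mul_div_of_mul_le hden hL hd
  have hδ₂ : L * r * d ≤ t * δ₂ * D := mul_le_mul_div_of_mul_le hden (mul_nonneg hL hr) hd
  have hδ₂D : 0 ≤ δ₂ * D := mul_nonneg (by positivity) hD0
  refine BoundedContinuousFunction.norm_le_of_nonempty.2 fun y => ?_
  rw [BoundedContinuousFunction.sub_apply, Real.norm_eq_abs, hΨΦ η ξ₁ hξ₁.symm y,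
    hΨΓ η ξ₂ hξ₂.symm y]
  calc _ ≤ (1 - t * B) * ‖Φ ξ₁ - Γ ξ₂‖ + t * r * (0.15 * M) * d :=
        abs_euler_step_sub_le hM ht0.le htBC hQs _ _ _ _ _
    _ ≤ (1 - t * B) * (D + t * δ₁ * D) + t * (t * δ₂ * D) := by
        have hMd : r * (0.15 * M) * d ≤ t * δ₂ * D := le_trans (by rw [mul_comm L r]; gcongr) hδ₂
        rw [show t * r * (0.15 * M) * d = t * (r * (0.15 * M) * d) by ring]
        exact add_le_add (mul_le_mul_of_nonneg_left (by linarith) h1tB)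
          (mul_le_mul_of_nonneg_left hMd ht0.le)
    _ ≤ _ := by nlinarith [mul_le_mul_of_nonneg_right ht1 hδ₂D]

/-- The Budyko graph transform is a contraction with factor ρ < 1 on the set of
r-admissible graphs in G_L. -/
theorem graph_transform_contraction (M L r t ε δ₁ δ₂ ρ : ℝ)
    (hM : 0 < M) (hL : max 0.62 (0.15 * M) ≤ L) (hr1 : 1 ≤ r)
    (hrs : ∀ y ∈ Set.Icc (0:ℝ) 1, |Q * s y| ≤ r)
    (ht0 : 0 < t) (ht1 : t < 1 / (B + C))
    (hε0 : 0 < ε) (hε1 : ε ≤ B / (2 * (L * r + L + r)))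
    (hδ₁ : δ₁ = L * ε / (1 - (L + r) * ε))
    (hδ₂ : δ₂ = L * r * ε / (1 - (L + r) * ε))
    (hρ : ρ = (1 - t * B) + t * ((1 - t * B) * δ₁ + δ₂)) :
    (δ₁ ≤ δ₂ ∧ δ₂ < B / 2) ∧ ρ < 1 ∧
      ∀ Φ Γ ΨΦ ΨΓ : ℝ → ℝ →ᵇ ℝ,
        Admissible r Φ → MemGL L Φ → Admissible r Γ → MemGL L Γ →
        IsGTImage M t ε Φ ΨΦ → IsGTImage M t ε Γ ΨΓ →
        (⨆ η : ℝ, ‖ΨΦ η - ΨΓ η‖) ≤ ρ * ⨆ η : ℝ, ‖Φ η - Γ η‖ := by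
  have hL0 : 0 < L := lt_of_lt_of_le (by norm_num) ((le_max_left _ _).trans hL)
  have hr0 : 0 < r := one_pos.trans_le hr1
  have hεB := mul_eps_le_half_B hL0 hr0 hε1
  have hden : 0 < 1 - (L + r) * ε := by
    have : 0 ≤ L * r * ε := by positivity
    norm_num [B] at hεB
    linarith
  have hδ₁₂ : δ₁ ≤ δ₂ := by
    rw [hδ₁, hδ₂]
    gcongr
    exact le_mul_of_one_le_right hL0.le hr1
  have hδ₂B : δ₂ < B / 2 := hδ₂ ▸ div_one_sub_lt_half_B hL0 hr0 hε0 hεB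
  have htBC : t * (B + C) ≤ 1 := ((lt_div_iff₀ (by norm_num [B, C])).1 ht1).le
  refine ⟨⟨hδ₁₂, hδ₂B⟩, hρ ▸ contraction_factor_lt_one ht0 (hδ₁ ▸ by positivity) hδ₁₂ hδ₂B,
    fun Φ Γ ΨΦ ΨΓ hΦ hΦL hΓ hΓL hΨΦ hΨΓ => ?_⟩
  have hbdd : BddAbove (Set.range fun η => ‖Φ η - Γ η‖) :=
    ⟨r + r, Set.forall_mem_range.2 fun η =>
      (norm_sub_le _ _).trans (add_le_add (hΦ.1 η) (hΓ.1 η))⟩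
  refine ciSup_le fun η => ?_
  rw [hρ, hδ₁, hδ₂]
  exact norm_graphTransform_sub_le hM.le ((le_max_right _ _).trans hL) (abs_Q_mul_sTilde_le hrs)
    ht0 htBC hε0.le hden hΦ hΦL hΓ hΓL hΨΦ hΨΓ (le_ciSup hbdd) η
end Budyko
end
end

section
/- Suppose M > 0, L ≥ max(0.62, 0.15*M), r ≥ 1 with r ≥ sup_{y∈[0,1]} |Q*s(y)|, 0 < t < 1/(B+C), and 0 < ε ≤ B/(2*(L*r + L + r)). If Φ* is an r-admissible fixed point of the graph transform in G_L, then for every ξ ∈ ℝ one has ‖Φ*(ξ) - T*(ξ)‖_∞ ≤ ε*L*(r + 10)/B; in particular the invariant graph Φ* lies within O(ε) of the local equilibrium set {T*(η) : η ∈ ℝ}. -/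
noncomputable section

open scoped BoundedContinuousFunction

namespace Budyko

lemma continuous_tanh : Continuous Real.tanh := by
  have h : Real.tanh = fun x => Real.sinh x / Real.cosh x :=
    funext fun x => Real.tanh_eq_sinh_div_cosh x
  rw [h]
  exact Real.continuous_sinh.div Real.continuous_cosh fun x => (Real.cosh_pos x).ne'

lemma continuous_clamp : Continuous clamp :=
  (continuous_id.max continuous_const).min continuous_const

lemma continuous_sTilde : Continuous sTilde := by
  unfold sTilde s
  exact continuous_const.sub (continuous_const.mul
    ((continuous_const.mul (continuous_clamp.pow 2)).sub continuous_const))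

lemma continuous_albedo (M η : ℝ) : Continuous (fun y => albedo M η y) := by
  unfold albedo
  exact continuous_const.add (continuous_const.mul
    (continuous_tanh.comp (continuous_const.mul (continuous_clamp.sub continuous_const))))

lemma clamp_eq {y : ℝ} (hy : y ∈ Set.Icc (0:ℝ) 1) : clamp y = y := by
  rcases hy with ⟨h0, h1⟩
  unfold clamp
  rw [max_eq_left h0, min_eq_left h1]

/-- The invariant graph lies within O(ε) of the local equilibrium set. -/
theorem invariant_graph_close_to_equilibria (M L r t ε : ℝ)
    (hM : 0 < M) (hL : max 0.62 (0.15 * M) ≤ L) (hr1 : 1 ≤ r)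
    (hrs : ∀ y ∈ Set.Icc (0:ℝ) 1, |Q * s y| ≤ r)
    (ht0 : 0 < t) (ht1 : t < 1 / (B + C))
    (hε0 : 0 < ε) (hε1 : ε ≤ B / (2 * (L * r + L + r)))
    (Φs : ℝ → ℝ →ᵇ ℝ)
    (hΦa : Admissible r Φs) (hΦL : MemGL L Φs) (hΦfix : IsGTFixed M t ε Φs) :
    ∀ ξ : ℝ, (⨆ y : ℝ, |Φs ξ y - Tstar M ξ y|) ≤ ε * L * (r + 10) / B := by
  intro ξ
  have hLpos : (0:ℝ) < L := lt_of_lt_of_le (by norm_num) ((le_max_left _ _).trans hL)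
  set T : ℝ →ᵇ ℝ := Φs ξ with hTdef
  set δ : ℝ := ε * L * (r + 10) with hδdef
  have hδ0 : 0 ≤ δ := by positivity
  set η : ℝ := ξ + ε * t * (T ξ - Tc) with hηdef
  have hfix : ∀ y, Φs η y = T y + t * F M T ξ y := hΦfix η ξ rfl
  -- pointwise bound on F along the invariant graph
  have hFb : ∀ y, |F M T ξ y| ≤ δ := by
    intro y
    have h1 : t * |F M T ξ y| = |Φs η y - T y| := by
      rw [hfix y, show T y + t * F M T ξ y - T y = t * F M T ξ y by ring,
        abs_mul, abs_of_pos ht0]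
    have h2 : |Φs η y - T y| ≤ L * |η - ξ| := by
      have h := BoundedContinuousFunction.norm_coe_le_norm (Φs η - Φs ξ) y
      simp only [BoundedContinuousFunction.coe_sub, Pi.sub_apply, Real.norm_eq_abs] at h
      exact h.trans (hΦL η ξ)
    have h3 : |η - ξ| = ε * t * |T ξ - Tc| := by
      rw [hηdef, show ξ + ε * t * (T ξ - Tc) - ξ = ε * t * (T ξ - Tc) by ring,
        abs_mul, abs_of_pos (by positivity : (0:ℝ) < ε * t)]
    have h4 : |T ξ - Tc| ≤ r + 10 := by
      have hn := (BoundedContinuousFunction.norm_coe_le_norm T ξ).trans (hΦa.1 ξ)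
      rw [Real.norm_eq_abs] at hn
      calc |T ξ - Tc| ≤ |T ξ| + |Tc| := abs_sub _ _
        _ ≤ r + 10 := by
            rw [show |Tc| = 10 by norm_num [Tc]]
            linarith
    have h5 : t * |F M T ξ y| ≤ t * δ := by
      rw [h1]
      calc |Φs η y - T y| ≤ L * (ε * t * (r + 10)) := by
            refine h2.trans ?_
            rw [h3]
            have := mul_le_mul_of_nonneg_left h4 (by positivity : (0:ℝ) ≤ ε * t)
            nlinarith
        _ = t * δ := by rw [hδdef]; ring
    exact le_of_mul_le_mul_left h5 ht0
  -- integral of F over [0,1]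
  set J : ℝ := ∫ y in (0:ℝ)..1, F M T ξ y with hJdef
  have hJb : |J| ≤ δ := by
    have h := intervalIntegral.norm_integral_le_of_norm_le_const
      (f := fun y => F M T ξ y) (C := δ) (a := (0:ℝ)) (b := 1)
      (fun x _ => by simpa using hFb x)
    simpa using h
  set I : ℝ := ∫ u in (0:ℝ)..1, T u with hIdef
  have hcont1 : Continuous (fun y => Q * sTilde y * (1 - albedo M ξ y)) :=
    (continuous_const.mul continuous_sTilde).mul
      (continuous_const.sub (continuous_albedo M ξ))
  have h1int : IntervalIntegrable (fun y => Q * sTilde y * (1 - albedo M ξ y))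
      MeasureTheory.volume 0 1 := hcont1.intervalIntegrable 0 1
  have h2int : IntervalIntegrable (fun y => (B + C) * T y) MeasureTheory.volume 0 1 :=
    (continuous_const.mul T.continuous).intervalIntegrable 0 1
  have hg : (∫ y in (0:ℝ)..1, Q * sTilde y * (1 - albedo M ξ y)) = g M ξ := by
    unfold g
    apply intervalIntegral.integral_congr
    intro y hy
    rw [Set.uIcc_of_le (by norm_num : (0:ℝ) ≤ 1)] at hy
    simp [sTilde, clamp_eq hy]
  have hJeq : J = g M ξ - A - B * I := by
    have heq : (fun y => F M T ξ y) =
        fun y => (Q * sTilde y * (1 - albedo M ξ y) - (B + C) * T y) + (C * I - A) := by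
      funext y
      rw [F, ← hIdef]
      ring
    rw [hJdef, heq,
      intervalIntegral.integral_add (h1int.sub h2int) intervalIntegrable_const,
      intervalIntegral.integral_sub h1int h2int, hg,
      intervalIntegral.integral_const_mul, intervalIntegral.integral_const, ← hIdef]
    simp only [smul_eq_mul]
    ring
  -- pointwise distance to the equilibrium profile
  have key : ∀ y, |T y - Tstar M ξ y| ≤ δ / B := by
    intro y
    have hgA : g M ξ = J + A + B * I := by rw [hJeq]; ring
    have hB0 : (B:ℝ) ≠ 0 := by norm_num [B]
    have hBC0 : (B + C:ℝ) ≠ 0 := by norm_num [B, C]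
    have hpt : T y - Tstar M ξ y = (-(C / B) * J - F M T ξ y) / (B + C) := by
      rw [Tstar, F, ← hIdef, hgA]
      field_simp
      ring
    rw [hpt]
    have hnum : |-(C / B) * J - F M T ξ y| ≤ (C / B) * δ + δ := by
      calc |-(C / B) * J - F M T ξ y| ≤ |-(C / B) * J| + |F M T ξ y| := abs_sub _ _
        _ ≤ (C / B) * δ + δ := by
            rw [abs_mul, abs_neg, abs_of_nonneg (by norm_num [B, C] : (0:ℝ) ≤ C / B)]
            have := mul_le_mul_of_nonneg_left hJb (by norm_num [B, C] : (0:ℝ) ≤ C / B)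
            linarith [hFb y]
    rw [abs_div, abs_of_pos (by norm_num [B, C] : (0:ℝ) < B + C),
      div_le_div_iff₀ (by norm_num [B, C] : (0:ℝ) < B + C) (by norm_num [B] : (0:ℝ) < B)]
    calc |-(C / B) * J - F M T ξ y| * B ≤ ((C / B) * δ + δ) * B :=
          mul_le_mul_of_nonneg_right hnum (by norm_num [B])
      _ = δ * (B + C) := by simp only [B, C]; ring
  exact ciSup_le fun y => key y
end Budyko
end
end

section
/- For every M > 0 and every η ∈ ℝ, a bounded continuous T : ℝ → ℝ satisfies F(T,η)(y) = 0 for all y ∈ ℝ if and only if T = T*(η); moreover any such T satisfies ∫₀¹ T(u) du = (g(η) - A)/B. -/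
noncomputable section

open scoped BoundedContinuousFunction

namespace Budyko

lemma continuous_f (M η : ℝ) :
    Continuous (fun y => Q * sTilde y * (1 - albedo M η y)) := by
  have hclamp : Continuous clamp := (continuous_id.max continuous_const).min continuous_const
  have hs : Continuous s := by unfold s; fun_prop
  have htanh : Continuous Real.tanh := by
    have h : Real.tanh = fun x => Real.sinh x / Real.cosh x := funext Real.tanh_eq_sinh_div_cosh
    rw [h]
    exact Real.continuous_sinh.div Real.continuous_cosh fun x => (Real.cosh_pos x).ne'
  have ha : Continuous (albedo M η) :=
    continuous_const.add (continuous_const.mul (htanh.comp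
      ((continuous_const.mul (hclamp.sub continuous_const)))))
  exact (continuous_const.mul (hs.comp hclamp)).mul (continuous_const.sub ha)

lemma integral_f (M η : ℝ) :
    (∫ y in (0:ℝ)..1, Q * sTilde y * (1 - albedo M η y)) = g M η := by
  unfold g
  apply intervalIntegral.integral_congr
  intro y hy
  rw [Set.uIcc_of_le (by norm_num : (0:ℝ) ≤ 1)] at hy
  have hc : clamp y = y := by
    unfold clamp
    rw [max_eq_left hy.1, min_eq_left hy.2]
  simp only [sTilde, hc]

/-- Characterization of the temperature-profile equilibria with iceline frozen at η. -/
theorem equilibrium_profile_characterization (M : ℝ) (hM : 0 < M) (η : ℝ)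
    (T : ℝ →ᵇ ℝ) :
    ((∀ y : ℝ, F M T η y = 0) ↔ ∀ y : ℝ, T y = Tstar M η y) ∧
    ((∀ y : ℝ, F M T η y = 0) → (∫ u in (0:ℝ)..1, T u) = (g M η - A) / B) := by
  have hBC : B + C ≠ 0 := by unfold B C; norm_num
  have hB : B ≠ 0 := by unfold B; norm_num
  set f : ℝ → ℝ := fun y => Q * sTilde y * (1 - albedo M η y) with hf
  have hfint : IntervalIntegrable f MeasureTheory.volume 0 1 :=
    (continuous_f M η).intervalIntegrable 0 1
  have hTint : IntervalIntegrable (fun u => T u) MeasureTheory.volume 0 1 :=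
    (map_continuous T).intervalIntegrable 0 1
  have key : (∀ y : ℝ, F M T η y = 0) → (∫ u in (0:ℝ)..1, T u) = (g M η - A) / B := by
    intro h
    set I := ∫ u in (0:ℝ)..1, T u with hI
    have hT : ∀ y, T y = (f y - A + C * I) / (B + C) := by
      intro y
      have h0 := h y
      unfold F at h0
      rw [← hI] at h0
      field_simp
      simp only [hf]
      linarith [h0]
    have hIeq : I = (g M η - A + C * I) / (B + C) := by
      conv_lhs => rw [hI]
      have heq : (fun u => T u) = fun u => f u / (B + C) + (-A + C * I) / (B + C) := by
        funext u
        rw [hT u]; ring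
      rw [intervalIntegral.integral_congr (fun u _ => congrFun heq u),
        intervalIntegral.integral_add ((hfint.div_const _)) intervalIntegrable_const,
        intervalIntegral.integral_div, integral_f, intervalIntegral.integral_const]
      simp
      ring
    have : I * B = g M η - A := by
      have := hIeq
      field_simp at this
      linarith
    field_simp
    linarith
  refine ⟨⟨fun h y => ?_, fun h y => ?_⟩, key⟩
  · have hIval := key h
    have h0 := h y
    unfold F at h0
    unfold Tstar
    rw [hIval] at h0
    field_simp at h0 ⊢
    linarith
  · -- converse: T = Tstar implies F = 0
    have hTs : ∀ u, T u = f u / (B + C) + (-A + (C / B) * (g M η - A)) / (B + C) := by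
      intro u
      rw [h u]
      unfold Tstar
      ring
    have hIval : (∫ u in (0:ℝ)..1, T u) = (g M η - A) / B := by
      rw [intervalIntegral.integral_congr (fun u _ => hTs u),
        intervalIntegral.integral_add ((hfint.div_const _)) intervalIntegrable_const,
        intervalIntegral.integral_div, integral_f, intervalIntegral.integral_const]
      simp
      field_simp
      ring
    unfold F
    rw [hIval, h y]
    unfold Tstar
    field_simp
    ring
end Budyko
end
end

section
/- For every M > 10, the Dynamic Iceline Budyko Model has exactly two equilibria with ice line in the unit interval: the set of pairs (T, η) with T : ℝ → ℝ bounded continuous, η ∈ [0,1], F(T,η)(y) = 0 for all y ∈ ℝ, and T(η) = T_c, is exactly {(T*(η₁), η₁), (T*(η₂), η₂)}, where η₁ < η₂ are the two roots of T*(η)(η) = T_c in [0,1]. -/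
noncomputable section

open scoped BoundedContinuousFunction

namespace Real

theorem hasDerivAt_tanh_s15 (x : ℝ) : HasDerivAt tanh (1 / cosh x ^ 2) x := by
  have h := (hasDerivAt_sinh x).div (hasDerivAt_cosh x) (cosh_pos x).ne'
  rw [show sinh / cosh = tanh from funext fun y => (tanh_eq_sinh_div_cosh y).symm, ← sq, ← sq,
    cosh_sq x, add_sub_cancel_left, ← cosh_sq] at h
  exact h

@[fun_prop]
theorem continuous_tanh : Continuous tanh :=
  continuous_iff_continuousAt.2 fun x => (hasDerivAt_tanh_s15 x).continuousAt

theorem tanh_strictMono : StrictMono tanh :=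
  strictMono_of_hasDerivAt_pos hasDerivAt_tanh_s15 fun x => by positivity

theorem tanh_nonneg {x : ℝ} (hx : 0 ≤ x) : 0 ≤ tanh x :=
  tanh_zero ▸ tanh_strictMono.monotone hx

theorem one_sub_two_mul_exp_neg_le_tanh (x : ℝ) : 1 - 2 * exp (-(2 * x)) ≤ tanh x := by
  have hsum : 0 < exp x + exp (-x) := by positivity
  have hprod : exp (-(2 * x)) * exp x = exp (-x) := by rw [← exp_add]; ring_nf
  rw [tanh_eq, le_div_iff₀ hsum]
  nlinarith [exp_pos (-(2 * x)), exp_pos (-x)]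

theorem le_tanh_of_five_div_two_le {x : ℝ} (hx : 5 / 2 ≤ x) : 0.98 ≤ tanh x := by
  have he : 100 ≤ exp 5 := by
    have h := pow_le_pow_left₀ (by norm_num) exp_one_gt_d9.le 5
    rw [← exp_nat_mul] at h
    norm_num at h
    linarith
  have h := one_sub_two_mul_exp_neg_le_tanh (5 / 2)
  rw [show -(2 * (5 / 2 : ℝ)) = -5 by norm_num, exp_neg] at h
  have : (exp 5)⁻¹ ≤ 1 / 100 := by rw [inv_eq_one_div]; gcongr
  linarith [tanh_strictMono.monotone hx]

end Real

open Set intervalIntegral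

section SechKernel

variable {M t a b c : ℝ} {w : ℝ → ℝ}

theorem continuous_sech_sq_kernel (M t : ℝ) :
    Continuous fun y => M / Real.cosh (M * (y - t)) ^ 2 :=
  continuous_const.div (by fun_prop) fun y => by positivity

theorem integral_sech_sq_kernel (M t a b : ℝ) :
    ∫ y in a..b, M / Real.cosh (M * (y - t)) ^ 2
      = Real.tanh (M * (b - t)) - Real.tanh (M * (a - t)) := by
  refine integral_eq_sub_of_hasDerivAt (f := fun y => Real.tanh (M * (y - t))) (fun y _ => ?_)
    ((continuous_sech_sq_kernel M t).intervalIntegrable a b)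
  have h := (Real.hasDerivAt_tanh_s15 _).comp y (((hasDerivAt_id y).sub_const t).const_mul M)
  exact h.congr_deriv (by simp [div_eq_mul_inv, mul_comm])

theorem integral_mul_sech_sq_kernel_le (hw : Continuous w) (hM : 0 ≤ M) (hab : a ≤ b)
    (hc : ∀ y ∈ Icc a b, w y ≤ c) :
    ∫ y in a..b, w y * (M / Real.cosh (M * (y - t)) ^ 2)
      ≤ c * (Real.tanh (M * (b - t)) - Real.tanh (M * (a - t))) := by
  rw [← integral_sech_sq_kernel, ← integral_const_mul]
  refine integral_mono_on hab ((hw.mul (continuous_sech_sq_kernel M t)).intervalIntegrable a b)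
    ((continuous_sech_sq_kernel M t).const_smul c |>.intervalIntegrable a b) fun y hy => ?_
  exact mul_le_mul_of_nonneg_right (hc y hy) (by positivity)

theorem le_integral_mul_sech_sq_kernel (hw : Continuous w) (hM : 0 ≤ M) (hab : a ≤ b)
    (hc : ∀ y ∈ Icc a b, c ≤ w y) :
    c * (Real.tanh (M * (b - t)) - Real.tanh (M * (a - t)))
      ≤ ∫ y in a..b, w y * (M / Real.cosh (M * (y - t)) ^ 2) := by
  rw [← integral_sech_sq_kernel, ← integral_const_mul]
  refine integral_mono_on hab
    ((continuous_sech_sq_kernel M t).const_smul c |>.intervalIntegrable a b)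
    ((hw.mul (continuous_sech_sq_kernel M t)).intervalIntegrable a b) fun y hy => ?_
  exact mul_le_mul_of_nonneg_right (hc y hy) (by positivity)

end SechKernel

theorem integral_exp_mul_sub_le {c : ℝ} (hc : 0 < c) (a b : ℝ) :
    ∫ y in a..b, Real.exp (c * y - c * b) ≤ 1 / c := by
  rw [integral_comp_mul_sub Real.exp hc.ne', integral_exp, sub_self, Real.exp_zero, smul_eq_mul,
    one_div]
  exact mul_le_of_le_one_right (inv_pos.2 hc).le (sub_le_self _ (Real.exp_pos _).le)

theorem exists_two_zeros_of_strictMonoOn_of_strictAntiOn {f : ℝ → ℝ} {a b c d : ℝ}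
    (hf : ContinuousOn f (Icc a d)) (hab : a ≤ b) (hbc : b ≤ c) (hcd : c ≤ d)
    (ha : f a < 0) (hd : f d < 0) (hmono : StrictMonoOn f (Icc a b))
    (hpos : ∀ x ∈ Icc b c, 0 < f x) (hanti : StrictAntiOn f (Icc c d)) :
    ∃ x₁ x₂, x₁ ∈ Icc a d ∧ x₂ ∈ Icc a d ∧ x₁ < x₂ ∧ f x₁ = 0 ∧ f x₂ = 0 ∧
      ∀ x ∈ Icc a d, f x = 0 → x = x₁ ∨ x = x₂ := by
  have hb := hpos b ⟨le_rfl, hbc⟩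
  have hc := hpos c ⟨hbc, le_rfl⟩
  obtain ⟨x₁, hx₁, hfx₁⟩ := intermediate_value_Icc hab
    (hf.mono (Icc_subset_Icc_right (hbc.trans hcd))) ⟨ha.le, hb.le⟩
  obtain ⟨x₂, hx₂, hfx₂⟩ := intermediate_value_Icc' hcd
    (hf.mono (Icc_subset_Icc_left (hab.trans hbc))) ⟨hd.le, hc.le⟩
  have hx₁b : x₁ < b := lt_of_le_of_ne hx₁.2 fun h => hb.ne' (h ▸ hfx₁)
  refine ⟨x₁, x₂, ⟨hx₁.1, by linarith [hx₁.2]⟩, ⟨by linarith [hx₂.1], hx₂.2⟩,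
    by linarith [hx₂.1], hfx₁, hfx₂, fun x hx hfx => ?_⟩
  rcases le_or_gt x b with hxb | hbx
  · exact .inl (hmono.injOn ⟨hx.1, hxb⟩ hx₁ (hfx.trans hfx₁.symm))
  rcases le_or_gt x c with hxc | hcx
  · exact absurd hfx (hpos x ⟨hbx.le, hxc⟩).ne'
  · exact .inr (hanti.injOn ⟨hcx.le, hx.2⟩ hx₂ (hfx.trans hfx₂.symm))

namespace Budyko

@[fun_prop]
theorem continuous_s : Continuous s := by unfold s; fun_prop

theorem s_nonneg {y : ℝ} (hy : y ∈ Icc (0 : ℝ) 1) : 0 ≤ s y := by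
  unfold s; nlinarith [hy.1, hy.2]

theorem s_le (y : ℝ) : s y ≤ 1.241 := by
  unfold s; nlinarith [sq_nonneg y]

theorem s_antitoneOn : AntitoneOn s (Ici 0) := fun x hx y _ hxy => by
  unfold s; nlinarith [mem_Ici.1 hx]

theorem integral_s (a b : ℝ) :
    ∫ y in a..b, s y = (1.241 * b - 0.241 * b ^ 3) - (1.241 * a - 0.241 * a ^ 3) := by
  refine integral_eq_sub_of_hasDerivAt (f := fun x => 1.241 * x - 0.241 * x ^ 3) (fun y _ => ?_)
    (continuous_s.intervalIntegrable a b)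
  exact ((hasDerivAt_id y).const_mul 1.241 |>.sub ((hasDerivAt_pow 3 y).const_mul 0.241))
    |>.congr_deriv (by unfold s; ring)

theorem clamp_of_mem {y : ℝ} (hy : y ∈ Icc (0 : ℝ) 1) : clamp y = y := by
  rw [clamp, max_eq_left hy.1, min_eq_left hy.2]

theorem continuous_absorbed (M η : ℝ) :
    Continuous fun y => Q * sTilde y * (1 - albedo M η y) := by
  unfold sTilde albedo clamp; fun_prop

theorem integral_absorbed (M η : ℝ) :
    ∫ y in (0 : ℝ)..1, Q * sTilde y * (1 - albedo M η y) = g M η :=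
  integral_congr fun y hy => by
    rw [uIcc_of_le zero_le_one] at hy
    simp only [sTilde, clamp_of_mem hy]

theorem integral_F (M : ℝ) (T : ℝ →ᵇ ℝ) (η : ℝ) :
    ∫ y in (0 : ℝ)..1, F M T η y = g M η - A - B * ∫ y in (0 : ℝ)..1, T y := by
  have hR := continuous_absorbed M η
  have hT := T.continuous
  simp only [F]
  rw [integral_add, integral_sub, integral_sub, integral_const_mul, integral_absorbed,
    integral_const, integral_const]
  · simp only [sub_zero, one_smul]; ring
  all_goals exact Continuous.intervalIntegrable (by fun_prop) _ _

theorem integral_Tstar (M η : ℝ) : ∫ y in (0 : ℝ)..1, Tstar M η y = (g M η - A) / B := by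
  have hR := continuous_absorbed M η
  simp only [Tstar]
  rw [integral_div, integral_add, integral_sub, integral_absorbed, integral_const, integral_const]
  · simp only [sub_zero, one_smul, B, C]
    field_simp
  all_goals exact Continuous.intervalIntegrable (by fun_prop) _ _

theorem F_eq_of_integral_eq {M : ℝ} {T : ℝ →ᵇ ℝ} {η : ℝ}
    (hT : ∫ y in (0 : ℝ)..1, T y = (g M η - A) / B) (y : ℝ) :
    F M T η y = (B + C) * (Tstar M η y - T y) := by
  rw [F, hT, Tstar]
  simp only [B, C]
  field_simp
  ring

theorem F_eq_zero_iff (M : ℝ) (T : ℝ →ᵇ ℝ) (η : ℝ) :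
    (∀ y, F M T η y = 0) ↔ ∀ y, T y = Tstar M η y := by
  have hBC : B + C ≠ 0 := by norm_num [B, C]
  constructor
  · intro hF
    have hint : ∫ y in (0 : ℝ)..1, T y = (g M η - A) / B := by
      have h := integral_F M T η
      simp only [hF, integral_zero] at h
      rw [eq_div_iff (by norm_num [B])]
      linarith
    intro y
    have h := F_eq_of_integral_eq hint y
    rw [hF y, zero_eq_mul] at h
    exact (sub_eq_zero.1 (h.resolve_left hBC)).symm
  · intro hT y
    have hint : ∫ y in (0 : ℝ)..1, T y = (g M η - A) / B := by
      rw [← integral_Tstar M η]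
      exact integral_congr fun u _ => hT u
    rw [F_eq_of_integral_eq hint, hT, sub_self, mul_zero]

def tanhMoment (M η : ℝ) : ℝ := ∫ y in (0 : ℝ)..1, s y * Real.tanh (M * (y - η))

def sechMoment (M t : ℝ) : ℝ := ∫ y in (0 : ℝ)..1, s y * (M / Real.cosh (M * (y - t)) ^ 2)

def iceLineResidual (M η : ℝ) : ℝ := 40.66539 - 131.43417 * η ^ 2 - 82.32 * tanhMoment M η

theorem g_eq_tanhMoment (M η : ℝ) : g M η = 181.79 - 51.45 * tanhMoment M η := by
  have h : ∀ y ∈ uIcc (0 : ℝ) 1, Q * s y * (1 - albedo M η y)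
      = 181.79 * s y - 51.45 * (s y * Real.tanh (M * (y - η))) := by
    intro y hy
    rw [uIcc_of_le zero_le_one] at hy
    simp only [albedo, Q, clamp_of_mem hy]
    ring
  rw [g, integral_congr h, integral_sub, integral_const_mul, integral_const_mul, integral_s,
    tanhMoment]
  · norm_num
  all_goals exact Continuous.intervalIntegrable (by fun_prop) _ _

theorem mul_Tstar_self_sub_Tc {M η : ℝ} (hη : η ∈ Icc (0 : ℝ) 1) :
    (B + C) * (Tstar M η η - Tc) = iceLineResidual M η := by
  simp only [Tstar, sTilde, albedo, clamp_of_mem hη, sub_self, mul_zero, Real.tanh_zero,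
    g_eq_tanhMoment, iceLineResidual, s, Q, A, B, C, Tc]
  field_simp
  ring

theorem Tstar_self_eq_Tc_iff {M η : ℝ} (hη : η ∈ Icc (0 : ℝ) 1) :
    Tstar M η η = Tc ↔ iceLineResidual M η = 0 := by
  rw [← mul_Tstar_self_sub_Tc hη, mul_eq_zero, sub_eq_zero, or_iff_right (by norm_num [B, C])]

theorem hasDerivAt_tanhMoment (M t : ℝ) : HasDerivAt (tanhMoment M) (-sechMoment M t) t := by
  have hderiv : ∀ y x : ℝ, HasDerivAt (fun x => s y * Real.tanh (M * (y - x)))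
      (s y * -(M / Real.cosh (M * (y - x)) ^ 2)) x := fun y x =>
    ((Real.hasDerivAt_tanh_s15 _).comp x (((hasDerivAt_id x).const_sub y).const_mul M)).const_mul
      (s y) |>.congr_deriv (by simp [div_eq_mul_inv, mul_comm])
  have hbound : ∀ y ∈ uIoc (0 : ℝ) 1, ∀ x : ℝ,
      ‖s y * -(M / Real.cosh (M * (y - x)) ^ 2)‖ ≤ 1.241 * |M| := by
    intro y hy x
    rw [uIoc_of_le zero_le_one] at hy
    rw [norm_mul, norm_neg, Real.norm_eq_abs, Real.norm_eq_abs,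
      abs_of_nonneg (s_nonneg (Ioc_subset_Icc_self hy)), abs_div,
      abs_of_pos (pow_pos (Real.cosh_pos _) 2)]
    have hcosh : 1 ≤ Real.cosh (M * (y - x)) ^ 2 := one_le_pow₀ (Real.one_le_cosh _)
    exact mul_le_mul (s_le y) (div_le_self (abs_nonneg M) hcosh) (by positivity) (by norm_num)
  have h := hasDerivAt_integral_of_dominated_loc_of_deriv_le (μ := MeasureTheory.volume)
    (a := 0) (b := 1) (x₀ := t) (bound := fun _ => 1.241 * |M|)
    (F := fun x y => s y * Real.tanh (M * (y - x)))
    (F' := fun x y => s y * -(M / Real.cosh (M * (y - x)) ^ 2)) Filter.univ_mem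
    (.of_forall fun x => (Continuous.aestronglyMeasurable (by fun_prop)))
    (Continuous.intervalIntegrable (by fun_prop) _ _)
    ((continuous_s.mul (continuous_sech_sq_kernel M t).neg).aestronglyMeasurable)
    (MeasureTheory.ae_of_all _ fun y hy x _ => hbound y hy x) intervalIntegrable_const
    (MeasureTheory.ae_of_all _ fun y _ x _ => hderiv y x)
  have hG := h.2
  simp only [mul_neg, integral_neg] at hG
  exact hG

theorem hasDerivAt_iceLineResidual (M t : ℝ) :
    HasDerivAt (iceLineResidual M) (-262.86834 * t + 82.32 * sechMoment M t) t :=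
  (((hasDerivAt_pow 2 t).const_mul _).const_sub _ |>.sub
    ((hasDerivAt_tanhMoment M t).const_mul _)).congr_deriv (by ring)

theorem continuous_iceLineResidual (M : ℝ) : Continuous (iceLineResidual M) :=
  continuous_iff_continuousAt.2 fun t => (hasDerivAt_iceLineResidual M t).continuousAt

theorem le_sechMoment {M t a b : ℝ} (hM : 0 ≤ M) (ha : 0 ≤ a) (hab : a ≤ b) (hb : b ≤ 1) :
    s b * (Real.tanh (M * (b - t)) - Real.tanh (M * (a - t))) ≤ sechMoment M t := by
  refine (le_integral_mul_sech_sq_kernel continuous_s hM hab fun y hy =>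
    s_antitoneOn (ha.trans hy.1) (ha.trans hab) hy.2).trans
    (integral_mono_interval ha hab hb ?_
      ((continuous_s.mul (continuous_sech_sq_kernel M t)).intervalIntegrable _ _))
  refine MeasureTheory.ae_restrict_of_forall_mem measurableSet_Ioc fun y hy => ?_
  exact mul_nonneg (s_nonneg (Ioc_subset_Icc_self hy)) (by positivity)

theorem sechMoment_le {M t : ℝ} (hM : 0 ≤ M) (ht : t ∈ Icc (1 / 4 : ℝ) 1) :
    sechMoment M t ≤ 2 * s (t - 1 / 4) + 1.241 * (1 - Real.tanh (M / 4)) := by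
  have hs : 0 ≤ s (t - 1 / 4) := s_nonneg ⟨by linarith [ht.1], by linarith [ht.2]⟩
  have hleft := integral_mul_sech_sq_kernel_le (t := t) continuous_s hM
    (by linarith [ht.1] : (0 : ℝ) ≤ t - 1 / 4) fun y _ => s_le y
  have hright := integral_mul_sech_sq_kernel_le (t := t) (a := t - 1 / 4) (b := 1) continuous_s hM
    (by linarith [ht.2])
    fun y hy => s_antitoneOn (by linarith [ht.1] : (0 : ℝ) ≤ t - 1 / 4)
      (by linarith [ht.1, hy.1] : (0 : ℝ) ≤ y) hy.1
  have hint := (continuous_s.fun_mul (continuous_sech_sq_kernel M t)).intervalIntegrable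
    (μ := MeasureTheory.volume)
  rw [sechMoment, ← integral_add_adjacent_intervals (b := t - 1 / 4) (hint _ _) (hint _ _)]
  have hquarter : M * (t - 1 / 4 - t) = -(M / 4) := by ring
  rw [hquarter, show M * (0 - t) = -(M * t) by ring, Real.tanh_neg, Real.tanh_neg] at hleft
  rw [hquarter, Real.tanh_neg] at hright
  nlinarith [Real.tanh_lt_one (M * t),
    mul_le_mul_of_nonneg_left (Real.tanh_lt_one (M * (1 - t))).le hs,
    mul_le_mul_of_nonneg_left (Real.tanh_lt_one (M / 4)).le hs]

theorem tanhMoment_le {M η : ℝ} (hM : 0 < M) (hη : η ∈ Icc (0 : ℝ) 1) :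
    tanhMoment M η ≤ (∫ y in η..1, s y) - (∫ y in (0 : ℝ)..η, s y) + 1.241 / M := by
  have hright : ∫ y in η..1, s y * Real.tanh (M * (y - η)) ≤ ∫ y in η..1, s y := by
    refine integral_mono_on hη.2 (Continuous.intervalIntegrable (by fun_prop) _ _)
      (continuous_s.intervalIntegrable _ _) fun y hy => ?_
    exact mul_le_of_le_one_right (s_nonneg ⟨hη.1.trans hy.1, hy.2⟩) (Real.tanh_lt_one _).le
  have hleft : ∫ y in (0 : ℝ)..η, s y * Real.tanh (M * (y - η))
      ≤ ∫ y in (0 : ℝ)..η, (-s y + 2.482 * Real.exp (2 * M * y - 2 * M * η)) := by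
    refine integral_mono_on hη.1 (Continuous.intervalIntegrable (by fun_prop) _ _)
      (Continuous.intervalIntegrable (by fun_prop) _ _) fun y hy => ?_
    have htanh := Real.one_sub_two_mul_exp_neg_le_tanh (M * (η - y))
    rw [show M * (y - η) = -(M * (η - y)) by ring, Real.tanh_neg]
    rw [show -(2 * (M * (η - y))) = 2 * M * y - 2 * M * η by ring] at htanh
    have hs := s_nonneg ⟨hy.1, hy.2.trans hη.2⟩
    nlinarith [s_le y, Real.exp_pos (2 * M * y - 2 * M * η)]
  have hexp := integral_exp_mul_sub_le (by positivity : 0 < 2 * M) 0 η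
  rw [integral_add (Continuous.intervalIntegrable (by fun_prop) _ _)
    (Continuous.intervalIntegrable (by fun_prop) _ _), integral_neg, integral_const_mul] at hleft
  rw [tanhMoment, ← integral_add_adjacent_intervals (b := η)
    (Continuous.intervalIntegrable (by fun_prop) _ _)
    (Continuous.intervalIntegrable (by fun_prop) _ _)]
  have : 2.482 * (1 / (2 * M)) = 1.241 / M := by field_simp; norm_num
  linarith

theorem le_tanhMoment_zero {M : ℝ} (hM : 10 ≤ M) :
    0.98 * ∫ y in (1 / 4 : ℝ)..1, s y ≤ tanhMoment M 0 := by
  rw [← integral_const_mul]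
  refine (integral_mono_on (by norm_num) (Continuous.intervalIntegrable (by fun_prop) _ _)
    (Continuous.intervalIntegrable (by fun_prop) _ _) fun y hy => ?_).trans
    (integral_mono_interval (by norm_num) (by norm_num) le_rfl ?_
      (Continuous.intervalIntegrable (by fun_prop) _ _))
  · rw [mul_comm]
    refine mul_le_mul_of_nonneg_left (Real.le_tanh_of_five_div_two_le ?_)
      (s_nonneg ⟨by linarith [hy.1], hy.2⟩)
    nlinarith [hy.1]
  · refine MeasureTheory.ae_restrict_of_forall_mem measurableSet_Ioc fun y hy => ?_
    exact mul_nonneg (s_nonneg (Ioc_subset_Icc_self hy))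
      (Real.tanh_nonneg (mul_nonneg (by linarith) (by linarith [hy.1])))

theorem neg_one_le_tanhMoment (M η : ℝ) : -1 ≤ tanhMoment M η := by
  have h : ∫ y in (0 : ℝ)..1, -s y = -1 := by rw [integral_neg, integral_s]; norm_num
  rw [← h]
  refine integral_mono_on zero_le_one (continuous_s.neg.intervalIntegrable _ _)
    (Continuous.intervalIntegrable (by fun_prop) _ _) fun y hy => ?_
  nlinarith [s_nonneg hy, Real.neg_one_lt_tanh (M * (y - η))]

theorem iceLineResidual_one_neg (M : ℝ) : iceLineResidual M 1 < 0 := by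
  rw [iceLineResidual]
  linarith [neg_one_le_tanhMoment M 1]

section Residual

variable {M : ℝ}

theorem iceLineResidual_zero_neg (hM : 10 ≤ M) : iceLineResidual M 0 < 0 := by
  have h := le_tanhMoment_zero hM
  rw [integral_s] at h
  rw [iceLineResidual]
  norm_num at h ⊢
  linarith

theorem iceLineResidual_pos (hM : 10 ≤ M) {η : ℝ} (hη : η ∈ Icc (0.35 : ℝ) 0.7) :
    0 < iceLineResidual M η := by
  have h := tanhMoment_le (η := η) (by linarith) ⟨by linarith [hη.1], by linarith [hη.2]⟩
  rw [integral_s, integral_s] at h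
  have hM' : 1.241 / M ≤ 0.1241 := by rw [div_le_iff₀ (by linarith)]; linarith
  rw [iceLineResidual]
  nlinarith [hη.1, hη.2, mul_nonneg (sub_nonneg.2 hη.1) (sub_nonneg.2 hη.2),
    mul_nonneg (mul_nonneg (sub_nonneg.2 hη.1) (sub_nonneg.2 hη.1)) (sub_nonneg.2 hη.2)]

theorem strictMonoOn_iceLineResidual (hM : 10 ≤ M) :
    StrictMonoOn (iceLineResidual M) (Icc 0 0.35) := by
  refine strictMonoOn_of_hasDerivWithinAt_pos (convex_Icc _ _)
    (continuous_iceLineResidual M).continuousOn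
    (fun x _ => (hasDerivAt_iceLineResidual M x).hasDerivWithinAt) fun x hx => ?_
  rw [interior_Icc] at hx
  have hK := le_sechMoment (t := x) (by linarith) le_rfl
    (by linarith [hx.1] : (0 : ℝ) ≤ x + 1 / 4) (by linarith [hx.2])
  rw [show M * (x + 1 / 4 - x) = M / 4 by ring, show M * (0 - x) = -(M * x) by ring,
    Real.tanh_neg, sub_neg_eq_add] at hK
  have hquarter := Real.le_tanh_of_five_div_two_le (by linarith : 5 / 2 ≤ M / 4)
  have hs : 0 ≤ s (x + 1 / 4) := s_nonneg ⟨by linarith [hx.1], by linarith [hx.2]⟩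
  have hsx : s (x + 1 / 4) = 1.241 - 0.723 * (x + 1 / 4) ^ 2 := by rw [s]; ring
  rcases le_or_gt x 0.3 with hx3 | hx3
  · have hMx := Real.tanh_nonneg (by nlinarith [hx.1] : 0 ≤ M * x)
    nlinarith [mul_le_mul_of_nonneg_left (by linarith : 0.98 ≤ Real.tanh (M / 4)
      + Real.tanh (M * x)) hs]
  · have hMx := Real.le_tanh_of_five_div_two_le (by nlinarith : 5 / 2 ≤ M * x)
    have hs' : 0.98 ≤ s (x + 1 / 4) := by nlinarith [hx.2]
    nlinarith [mul_le_mul_of_nonneg_left (by linarith : 1.96 ≤ Real.tanh (M / 4)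
      + Real.tanh (M * x)) hs]

theorem strictAntiOn_iceLineResidual (hM : 10 ≤ M) :
    StrictAntiOn (iceLineResidual M) (Icc 0.7 1) := by
  refine strictAntiOn_of_hasDerivWithinAt_neg (convex_Icc _ _)
    (continuous_iceLineResidual M).continuousOn
    (fun x _ => (hasDerivAt_iceLineResidual M x).hasDerivWithinAt) fun x hx => ?_
  rw [interior_Icc] at hx
  have hK := sechMoment_le (t := x) (by linarith) ⟨by linarith [hx.1], hx.2.le⟩
  have hquarter := Real.le_tanh_of_five_div_two_le (by linarith : 5 / 2 ≤ M / 4)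
  have hsx : s (x - 1 / 4) = 1.241 - 0.723 * (x - 1 / 4) ^ 2 := by rw [s]; ring
  nlinarith [hx.1, hx.2]

end Residual

/-- For M > 10 the Dynamic Iceline Budyko Model has exactly two equilibria with iceline
in the unit interval, namely (T*(η₁), η₁) and (T*(η₂), η₂). -/
theorem two_equilibria (M : ℝ) (hM : 10 < M) :
    ∃ η₁ η₂ : ℝ, η₁ ∈ Set.Icc (0:ℝ) 1 ∧ η₂ ∈ Set.Icc (0:ℝ) 1 ∧ η₁ < η₂ ∧
      Tstar M η₁ η₁ = Tc ∧ Tstar M η₂ η₂ = Tc ∧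
      (∀ η ∈ Set.Icc (0:ℝ) 1, Tstar M η η = Tc → η = η₁ ∨ η = η₂) ∧
      ∀ (T : ℝ →ᵇ ℝ) (η : ℝ),
        ((η ∈ Set.Icc (0:ℝ) 1 ∧ (∀ y : ℝ, F M T η y = 0) ∧ T η = Tc) ↔
          ((η = η₁ ∧ ∀ y : ℝ, T y = Tstar M η₁ y) ∨
           (η = η₂ ∧ ∀ y : ℝ, T y = Tstar M η₂ y))) := by
  obtain ⟨η₁, η₂, hη₁, hη₂, hlt, hP₁, hP₂, hzeros⟩ :=
    exists_two_zeros_of_strictMonoOn_of_strictAntiOn (continuous_iceLineResidual M).continuousOn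
      (by norm_num : (0 : ℝ) ≤ 0.35) (by norm_num : (0.35 : ℝ) ≤ 0.7)
      (by norm_num : (0.7 : ℝ) ≤ 1)
      (iceLineResidual_zero_neg hM.le) (iceLineResidual_one_neg M)
      (strictMonoOn_iceLineResidual hM.le) (fun η hη => iceLineResidual_pos hM.le hη)
      (strictAntiOn_iceLineResidual hM.le)
  have hT₁ := (Tstar_self_eq_Tc_iff hη₁).2 hP₁
  have hT₂ := (Tstar_self_eq_Tc_iff hη₂).2 hP₂
  refine ⟨η₁, η₂, hη₁, hη₂, hlt, hT₁, hT₂,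
    fun η hη h => hzeros η hη ((Tstar_self_eq_Tc_iff hη).1 h), fun T η => ?_⟩
  simp only [F_eq_zero_iff]
  constructor
  · rintro ⟨hη, hT, hTc⟩
    rcases hzeros η hη ((Tstar_self_eq_Tc_iff hη).1 (hT η ▸ hTc)) with rfl | rfl
    exacts [.inl ⟨rfl, hT⟩, .inr ⟨rfl, hT⟩]
  · rintro (⟨rfl, hT⟩ | ⟨rfl, hT⟩)
    exacts [⟨hη₁, hT, (hT _).trans hT₁⟩, ⟨hη₂, hT, (hT _).trans hT₂⟩]

end Budyko
end
end
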